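/- Let (T,r) be a rooted tree and let u and v be two vertices of T at the same level. Then cdl(u) = cdl(v) if and only if the rooted subtree of descendants of u (the subgraph of T induced on the descendants of u, rooted at u) is isomorphic, as a rooted tree, to the rooted subtree of descendants of v. -/

import Mathlib

/-! By induction on the level. For a vertex other than the root (the root is the only vertex at
its level), being a leaf means having no children, so its label is always the sorted list of the
compressed labels of its children. Compression is injective on each level, so two labels at the
same level agree iff the children of the two vertices carry the same multiset of labels, i.e.
(inductively) iff the children can be matched so that matched children have isomorphic
subtrees. Such a matching glues to a rooted isomorphism of the two subtrees. Conversely, a rooted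
isomorphism preserves the distance to its root, hence maps children to children and the subtree of
each child onto the subtree of its image. -/

attribute [local instance] Classical.propDecidable

namespace AHU

variable {V : Type*}

/-- The height of the rooted tree `(G, r)`: maximum distance from the root. -/
noncomputable def height (G : SimpleGraph V) [Fintype V] (r : V) : ℕ :=
  Finset.univ.sup fun v => G.dist r v

/-- The level of a vertex: height minus distance from the root. -/
noncomputable def lvl (G : SimpleGraph V) [Fintype V] (r : V) (v : V) : ℕ :=
  height G r - G.dist r v

/-- `T_i`: the set of vertices at level `i`. -/
noncomputable def levelSet (G : SimpleGraph V) [Fintype V] (r : V) (i : ℕ) : Finset V :=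
  Finset.univ.filter fun v => lvl G r v = i

/-- A vertex is a leaf if it has degree at most one. -/
def IsLeaf (G : SimpleGraph V) (v : V) : Prop :=
  {u | G.Adj v u}.ncard ≤ 1

/-- The parent of `v ≠ r`: the unique neighbour of `v` lying closer to the root
(on the unique path from `r` to `v`).  For `v = r` we return `v` itself. -/
noncomputable def parent (G : SimpleGraph V) (r v : V) : V :=
  if h : ∃ p, G.Adj p v ∧ G.dist r p + 1 = G.dist r v then h.choose else v

/-- The set of children of `u`. -/
noncomputable def children (G : SimpleGraph V) [Fintype V] (r u : V) : Finset V :=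
  Finset.univ.filter fun v => v ≠ r ∧ parent G r v = u

/-- The label-compression of a finite set `S` of tuples: the unique order isomorphism
from `(S, ≤lex)` onto `{0, …, |S| - 1}`, i.e. `s ↦ #{t ∈ S | t <lex s}`. -/
noncomputable def compress (S : Finset (List ℕ)) (s : List ℕ) : ℕ :=
  (S.filter fun t => List.Lex (· < ·) t s).card

/-- Auxiliary, level-indexed version of the compressed descendant labeling:
`labelAt G r i v` is the label of a vertex `v` of level `i`. -/
noncomputable def labelAt (G : SimpleGraph V) [Fintype V] (r : V) : ℕ → V → List ℕ
  | 0, _ => []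
  | (i + 1), v =>
      if IsLeaf G v then []
      else
        Multiset.sort
          ((children G r v).val.map fun u =>
            compress ((levelSet G r i).image (labelAt G r i)) (labelAt G r i u)) (· ≤ ·)

/-- The compressed descendant labeling `cdl : V(T) → ℕ*`. -/
noncomputable def cdl (G : SimpleGraph V) [Fintype V] (r : V) (v : V) : List ℕ :=
  labelAt G r (lvl G r v) v

/-- `𝓛(W)`: the multiset of compressed descendant labels of the vertices of `W`. -/
noncomputable def labels (G : SimpleGraph V) [Fintype V] (r : V) (W : Finset V) :
    Multiset (List ℕ) :=
  W.val.map (cdl G r)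

/-- The level-label condition: the multisets of labels agree on every level
`i = 0, 1, …, max(height T, height T')`. -/
noncomputable def LevelLabelCondition {V' : Type*} (G : SimpleGraph V) [Fintype V] (r : V)
    (G' : SimpleGraph V') [Fintype V'] (r' : V') : Prop :=
  ∀ i ≤ max (height G r) (height G' r' ),
    labels G r (levelSet G r i) = labels G' r' (levelSet G' r' i)

/-- The set of descendants of `u`: the vertices `w` such that `u` lies on the unique
path from the root `r` to `w` (in a tree, equivalently, `dist r u + dist u w = dist r w`).
In particular `u` is a descendant of itself. -/
def descendants (G : SimpleGraph V) (r u : V) : Set V :=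
  {w | G.dist r u + G.dist u w = G.dist r w}

lemma self_mem_descendants (G : SimpleGraph V) (r u : V) : u ∈ descendants G r u := by
  simp [descendants]

open SimpleGraph Set

section Metric

variable {G : SimpleGraph V}

lemma _root_.SimpleGraph.Connected.exists_adj_dist_add_one (hG : G.Connected) {u v : V}
    (hne : u ≠ v) :
    ∃ w, G.Adj u w ∧ G.dist w v + 1 = G.dist u v := by
  obtain ⟨p, hp⟩ := hG.exists_walk_length_eq_dist u v
  have hnil : ¬ p.Nil := p.not_nil_of_ne hne
  refine ⟨p.snd, p.adj_snd hnil, le_antisymm ?_ ?_⟩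
  · rw [← hp, ← p.length_tail_add_one hnil]
    exact Nat.add_le_add_right (dist_le _) 1
  · have := hG.dist_triangle (u := u) (v := p.snd) (w := v)
    rw [dist_eq_one_iff_adj.2 (p.adj_snd hnil)] at this
    omega

lemma _root_.SimpleGraph.Connected.dist_add_dist_of_mem_support (hG : G.Connected) {x y z : V}
    {p : G.Walk x y} (hp : p.length = G.dist x y) (hz : z ∈ p.support) :
    G.dist x z + G.dist z y = G.dist x y := by
  have hsplit : (p.takeUntil z hz).length + (p.dropUntil z hz).length = p.length := by
    rw [← Walk.length_append, p.take_spec hz]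
  have := dist_le (p.takeUntil z hz)
  have := dist_le (p.dropUntil z hz)
  have := hG.dist_triangle (u := x) (v := z) (w := y)
  omega

lemma dist_map_le_length {D : Set V} {f : V → V}
    (hf : ∀ a ∈ D, ∀ b ∈ D, G.Adj a b → G.Adj (f a) (f b)) {a b : V} (p : G.Walk a b)
    (hp : ∀ z ∈ p.support, z ∈ D) : G.dist (f a) (f b) ≤ p.length := by
  let φ : G.induce D →g G := ⟨fun x => f x, fun {x y} h => hf x x.2 y y.2 h⟩
  calc G.dist (f a) (f b) ≤ ((p.induce D hp).map φ).length := dist_le _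
    _ = p.length := by
      have := congrArg Walk.length (p.map_induce hp)
      rwa [Walk.length_map] at this ⊢

/-- On the unique path from `x` to `y` in a tree, a vertex is determined by its distance
from `x`. -/
lemma _root_.SimpleGraph.IsTree.eq_of_dist_add_dist_eq (hT : G.IsTree) {x y a b : V}
    (ha : G.dist x a + G.dist a y = G.dist x y) (hb : G.dist x b + G.dist b y = G.dist x y)
    (hab : G.dist x a = G.dist x b) : a = b := by
  have path_through : ∀ c, G.dist x c + G.dist c y = G.dist x y →
      ∃ p : G.Walk x y, p.IsPath ∧ p.getVert (G.dist x c) = c := by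
    intro c hc
    obtain ⟨p, hp⟩ := hT.connected.exists_walk_length_eq_dist x c
    obtain ⟨q, hq⟩ := hT.connected.exists_walk_length_eq_dist c y
    refine ⟨p.append q, (p.append q).isPath_of_length_eq_dist (by simp; omega), ?_⟩
    rw [← hp, Walk.getVert_append]
    simp
  obtain ⟨p, hp, hpa⟩ := path_through a ha
  obtain ⟨q, hq, hqb⟩ := path_through b hb
  rw [← hpa, ← hqb, hab, (hT.existsUnique_path x y).unique hp hq]

end Metric

section RootedTree

variable {G : SimpleGraph V} {r : V}

lemma parent_eq (hT : G.IsTree) {v p : V} (hadj : G.Adj p v)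
    (hd : G.dist r p + 1 = G.dist r v) : parent G r v = p := by
  have hex : ∃ q, G.Adj q v ∧ G.dist r q + 1 = G.dist r v := ⟨p, hadj, hd⟩
  obtain ⟨hadj', hd'⟩ := hex.choose_spec
  rw [parent, dif_pos hex]
  refine hT.eq_of_dist_add_dist_eq (x := r) (y := v) ?_ ?_ (by omega)
  · rw [dist_eq_one_iff_adj.2 hadj', hd']
  · rw [dist_eq_one_iff_adj.2 hadj, hd]

lemma adj_parent (hT : G.IsTree) {v : V} (hv : v ≠ r) :
    G.Adj (parent G r v) v ∧ G.dist r (parent G r v) + 1 = G.dist r v := by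
  obtain ⟨p, hadj, hd⟩ := hT.connected.exists_adj_dist_add_one hv
  rw [dist_comm, dist_comm (u := v)] at hd
  rw [parent_eq hT hadj.symm hd]
  exact ⟨hadj.symm, hd⟩

lemma mem_descendants {u w : V} :
    w ∈ descendants G r u ↔ G.dist r u + G.dist u w = G.dist r w := Iff.rfl

lemma dist_add_dist_of_mem_descendants (hT : G.IsTree) {u w x : V}
    (hw : w ∈ descendants G r u) (hx : x ∈ descendants G r w) :
    G.dist u w + G.dist w x = G.dist u x := by
  rw [mem_descendants] at hw hx
  have := hT.connected.dist_triangle (u := u) (v := w) (w := x)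
  have := hT.connected.dist_triangle (u := r) (v := u) (w := x)
  omega

lemma mem_descendants_trans (hT : G.IsTree) {u w x : V}
    (hw : w ∈ descendants G r u) (hx : x ∈ descendants G r w) : x ∈ descendants G r u := by
  have := dist_add_dist_of_mem_descendants hT hw hx
  rw [mem_descendants] at *
  omega

lemma mem_descendants_of_adj {a b : V} (hadj : G.Adj a b) (hd : G.dist r b = G.dist r a + 1) :
    b ∈ descendants G r a := by
  rw [mem_descendants, dist_eq_one_iff_adj.2 hadj, hd]

variable [Fintype V]

lemma mem_children_iff (hT : G.IsTree) {u c : V} :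
    c ∈ children G r u ↔ G.Adj u c ∧ G.dist r c = G.dist r u + 1 := by
  simp only [children, Finset.mem_filter, Finset.mem_univ, true_and]
  constructor
  · rintro ⟨hc, rfl⟩
    obtain ⟨hadj, hd⟩ := adj_parent hT hc
    exact ⟨hadj, hd.symm⟩
  · rintro ⟨hadj, hd⟩
    refine ⟨?_, parent_eq hT hadj hd.symm⟩
    rintro rfl
    simp at hd

lemma adj_iff_eq_parent_or_mem_children (hT : G.IsTree) {u w : V} (hu : u ≠ r) :
    G.Adj u w ↔ w = parent G r u ∨ w ∈ children G r u := by
  rw [mem_children_iff hT]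
  constructor
  · intro hadj
    rcases hT.dist_eq_dist_add_one_of_adj r hadj with hd | hd
    · exact Or.inl (parent_eq hT hadj.symm hd.symm).symm
    · exact Or.inr ⟨hadj, hd⟩
  · rintro (rfl | ⟨hadj, -⟩)
    · exact (adj_parent hT hu).1.symm
    · exact hadj

lemma isLeaf_iff_children_eq_empty (hT : G.IsTree) {u : V} (hu : u ≠ r) :
    IsLeaf G u ↔ children G r u = ∅ := by
  simp only [IsLeaf, Set.ncard_le_one (Set.toFinite _), Set.mem_ofPred_eq,
    adj_iff_eq_parent_or_mem_children hT hu, Finset.eq_empty_iff_forall_notMem]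
  constructor
  · intro h c hc
    have hd := (adj_parent hT hu).2
    rw [h c (Or.inr hc) _ (Or.inl rfl), mem_children_iff hT] at hc
    omega
  · intro h a ha b hb
    rw [ha.resolve_right (h a), hb.resolve_right (h b)]

lemma mem_descendants_of_mem_children (hT : G.IsTree) {u c : V} (hc : c ∈ children G r u) :
    c ∈ descendants G r u :=
  mem_descendants_of_adj ((mem_children_iff hT).1 hc).1 ((mem_children_iff hT).1 hc).2

lemma descendants_subset_of_mem_children (hT : G.IsTree) {u c : V} (hc : c ∈ children G r u) :
    descendants G r c ⊆ descendants G r u :=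
  fun _ => mem_descendants_trans hT (mem_descendants_of_mem_children hT hc)

lemma notMem_descendants_of_mem_children (hT : G.IsTree) {u c : V} (hc : c ∈ children G r u) :
    u ∉ descendants G r c := by
  rw [mem_descendants, ((mem_children_iff hT).1 hc).2]
  omega

lemma mem_children_of_adj_of_mem_descendants (hT : G.IsTree) {u c : V}
    (hc : c ∈ descendants G r u) (hadj : G.Adj u c) : c ∈ children G r u := by
  rw [mem_descendants, dist_eq_one_iff_adj.2 hadj] at hc
  exact (mem_children_iff hT).2 ⟨hadj, hc.symm⟩

lemma exists_mem_children_of_mem_descendants (hT : G.IsTree) {u w : V}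
    (hw : w ∈ descendants G r u) (hwu : w ≠ u) :
    ∃ c ∈ children G r u, w ∈ descendants G r c := by
  obtain ⟨c, hadj, hd⟩ := hT.connected.exists_adj_dist_add_one (Ne.symm hwu)
  have := hT.connected.dist_triangle (u := r) (v := u) (w := c)
  have := hT.connected.dist_triangle (u := r) (v := c) (w := w)
  rw [dist_eq_one_iff_adj.2 hadj] at *
  rw [mem_descendants] at hw
  have hrc : G.dist r c = G.dist r u + 1 := by omega
  exact ⟨c, (mem_children_iff hT).2 ⟨hadj, hrc⟩, by rw [mem_descendants]; omega⟩

lemma eq_of_mem_descendants_of_mem_children (hT : G.IsTree) {u c c' w : V}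
    (hc : c ∈ children G r u) (hc' : c' ∈ children G r u)
    (hw : w ∈ descendants G r c) (hw' : w ∈ descendants G r c') : c = c' :=
  hT.eq_of_dist_add_dist_eq hw hw'
    (((mem_children_iff hT).1 hc).2.trans ((mem_children_iff hT).1 hc').2.symm)

lemma exists_mem_children_of_adj (hT : G.IsTree) {u a b : V}
    (ha : a ∈ descendants G r u) (hb : b ∈ descendants G r u) (hau : a ≠ u) (hbu : b ≠ u)
    (hab : G.Adj a b) :
    ∃ c ∈ children G r u, a ∈ descendants G r c ∧ b ∈ descendants G r c := by
  wlog hd : G.dist r b = G.dist r a + 1 generalizing a b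
  · have hd' := (hT.dist_eq_dist_add_one_of_adj r hab).resolve_right hd
    obtain ⟨c, hc, hbc, hac⟩ := this hb ha hbu hau hab.symm hd'
    exact ⟨c, hc, hac, hbc⟩
  obtain ⟨c, hc, hac⟩ := exists_mem_children_of_mem_descendants hT ha hau
  exact ⟨c, hc, hac, mem_descendants_trans hT hac (mem_descendants_of_adj hab hd)⟩

end RootedTree

section SubtreeIso

variable {G : SimpleGraph V} {r : V}

structure IsSubtreeHom (G : SimpleGraph V) (r u v : V) (f : V → V) : Prop where
  map_root : f u = v
  mapsTo : MapsTo f (descendants G r u) (descendants G r v)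
  map_adj :
    ∀ a ∈ descendants G r u, ∀ b ∈ descendants G r u, G.Adj a b → G.Adj (f a) (f b)

/-- Only the values of `f` and `g` on the descendants of `u` and of `v` matter. -/
structure IsSubtreeIso (G : SimpleGraph V) (r u v : V) (f g : V → V) : Prop where
  hom : IsSubtreeHom G r u v f
  inv : IsSubtreeHom G r v u g
  invOn : InvOn g f (descendants G r u) (descendants G r v)

def SubtreeIso (G : SimpleGraph V) (r u v : V) : Prop :=
  ∃ f g : V → V, IsSubtreeIso G r u v f g

lemma IsSubtreeIso.symm {u v : V} {f g : V → V} (h : IsSubtreeIso G r u v f g) :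
    IsSubtreeIso G r v u g f :=
  ⟨h.inv, h.hom, h.invOn.symm⟩

lemma SubtreeIso.refl (u : V) : SubtreeIso G r u u :=
  ⟨id, id, ⟨rfl, mapsTo_id _, fun _ _ _ _ h => h⟩, ⟨rfl, mapsTo_id _, fun _ _ _ _ h => h⟩,
    ⟨fun _ _ => rfl, fun _ _ => rfl⟩⟩

lemma isSubtreeHom_of_iso {u v : V}
    (φ : G.induce (descendants G r u) ≃g G.induce (descendants G r v))
    (hφ : φ ⟨u, self_mem_descendants G r u⟩ = ⟨v, self_mem_descendants G r v⟩) :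
    IsSubtreeHom G r u v
      fun w => if h : w ∈ descendants G r u then (φ ⟨w, h⟩ : V) else w where
  map_root := by simp [self_mem_descendants, hφ]
  mapsTo w hw := by
    simp only [dif_pos hw]
    exact (φ _).2
  map_adj a ha b hb hab := by
    simp only [dif_pos ha, dif_pos hb]
    exact φ.map_adj_iff.2 hab

theorem subtreeIso_iff_exists_iso {u v : V} :
    SubtreeIso G r u v ↔
      ∃ φ : G.induce (descendants G r u) ≃g G.induce (descendants G r v),
        φ ⟨u, self_mem_descendants G r u⟩ = ⟨v, self_mem_descendants G r v⟩ := by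
  constructor
  · rintro ⟨f, g, h⟩
    refine ⟨⟨⟨fun a => ⟨f a, h.hom.mapsTo a.2⟩, fun b => ⟨g b, h.inv.mapsTo b.2⟩,
      fun a => Subtype.ext (h.invOn.1 a.2), fun b => Subtype.ext (h.invOn.2 b.2)⟩,
      fun {a b} => ?_⟩, Subtype.ext h.hom.map_root⟩
    simp only [Equiv.coe_fn_mk, comap_adj, Function.Embedding.coe_subtype]
    refine ⟨fun hab => ?_, h.hom.map_adj a a.2 b b.2⟩
    simpa only [h.invOn.1 a.2, h.invOn.1 b.2] using
      h.inv.map_adj _ (h.hom.mapsTo a.2) _ (h.hom.mapsTo b.2) hab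
  · rintro ⟨φ, hφ⟩
    have hφ' :
        φ.symm ⟨v, self_mem_descendants G r v⟩ = ⟨u, self_mem_descendants G r u⟩ := by
      rw [← hφ, φ.symm_apply_apply]
    refine ⟨_, _, isSubtreeHom_of_iso φ hφ, isSubtreeHom_of_iso φ.symm hφ',
      fun w hw => ?_, fun w hw => ?_⟩ <;> simp [hw]

lemma IsSubtreeHom.dist_map_le (hT : G.IsTree) {u v a b : V} {f : V → V}
    (h : IsSubtreeHom G r u v f) (ha : a ∈ descendants G r u) (hb : b ∈ descendants G r a) :
    G.dist (f a) (f b) ≤ G.dist a b := by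
  obtain ⟨p, hp⟩ := hT.connected.exists_walk_length_eq_dist a b
  rw [← hp]
  refine dist_map_le_length h.map_adj p fun z hz => mem_descendants_trans hT ha ?_
  -- a geodesic from `a` to a descendant `b` of `a` runs through descendants of `a`
  have := hT.connected.dist_add_dist_of_mem_support hp hz
  have := hT.connected.dist_triangle (u := r) (v := a) (w := z)
  have := hT.connected.dist_triangle (u := r) (v := z) (w := b)
  rw [mem_descendants] at hb ⊢
  omega

lemma IsSubtreeIso.dist_map (hT : G.IsTree) {u v w : V} {f g : V → V}
    (h : IsSubtreeIso G r u v f g) (hw : w ∈ descendants G r u) :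
    G.dist v (f w) = G.dist u w := by
  apply le_antisymm
  · simpa [h.hom.map_root] using h.hom.dist_map_le hT (self_mem_descendants G r u) hw
  · have := h.inv.dist_map_le hT (self_mem_descendants G r v) (h.hom.mapsTo hw)
    rwa [h.inv.map_root, h.invOn.1 hw] at this

variable [Fintype V]

lemma IsSubtreeIso.map_mem_children (hT : G.IsTree) {u v c : V} {f g : V → V}
    (h : IsSubtreeIso G r u v f g) (hc : c ∈ children G r u) : f c ∈ children G r v := by
  have hcu := mem_descendants_of_mem_children hT hc
  refine mem_children_of_adj_of_mem_descendants hT (h.hom.mapsTo hcu) ?_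
  rw [← h.hom.map_root]
  exact h.hom.map_adj u (self_mem_descendants G r u) c hcu ((mem_children_iff hT).1 hc).1

lemma IsSubtreeIso.mapsTo_descendants_child (hT : G.IsTree) {u v c : V} {f g : V → V}
    (h : IsSubtreeIso G r u v f g) (hc : c ∈ children G r u) :
    MapsTo f (descendants G r c) (descendants G r (f c)) := by
  -- `d(v, f w) = d(u, w) = 1 + d(c, w) ≥ d(v, f c) + d(f c, f w)`, so `f c` lies on the
  -- geodesic from `v` to `f w`
  intro w hw
  have hcu := mem_descendants_of_mem_children hT hc
  have hwu := mem_descendants_trans hT hcu hw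
  have hfc := (mem_children_iff hT).1 (h.map_mem_children hT hc)
  have := h.hom.dist_map_le hT hcu hw
  have := h.dist_map hT hwu
  have := dist_add_dist_of_mem_descendants hT hcu hw
  have := dist_eq_one_iff_adj.2 ((mem_children_iff hT).1 hc).1
  have := h.hom.mapsTo hwu
  have := hT.connected.dist_triangle (u := r) (v := f c) (w := f w)
  rw [mem_descendants] at *
  omega

lemma IsSubtreeIso.restrict_child (hT : G.IsTree) {u v c : V} {f g : V → V}
    (h : IsSubtreeIso G r u v f g) (hc : c ∈ children G r u) : IsSubtreeIso G r c (f c) f g := by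
  have hfc := h.map_mem_children hT hc
  have hsub := descendants_subset_of_mem_children hT hc
  have hsub' := descendants_subset_of_mem_children hT hfc
  have hgfc : g (f c) = c := h.invOn.1 (mem_descendants_of_mem_children hT hc)
  refine ⟨⟨rfl, h.mapsTo_descendants_child hT hc,
      fun a ha b hb => h.hom.map_adj a (hsub ha) b (hsub hb)⟩,
    ⟨hgfc, by simpa only [hgfc] using h.symm.mapsTo_descendants_child hT hfc,
      fun a ha b hb => h.inv.map_adj a (hsub' ha) b (hsub' hb)⟩, h.invOn.mono hsub hsub'⟩

noncomputable def glue (G : SimpleGraph V) (r u v : V) (F : children G r u → V → V) : V → V :=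
  fun w => if h : ∃ c : children G r u, w ∈ descendants G r c then F h.choose w else v

lemma glue_root (hT : G.IsTree) {u v : V} (F : children G r u → V → V) :
    glue G r u v F u = v :=
  dif_neg fun ⟨c, hc⟩ => notMem_descendants_of_mem_children hT c.2 hc

lemma glue_of_mem_descendants (hT : G.IsTree) {u v w : V} {F : children G r u → V → V}
    (c : children G r u) (hw : w ∈ descendants G r c) : glue G r u v F w = F c w := by
  have h : ∃ c : children G r u, w ∈ descendants G r c := ⟨c, hw⟩
  have hc : h.choose = c :=
    Subtype.ext (eq_of_mem_descendants_of_mem_children hT h.choose.2 c.2 h.choose_spec hw)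
  rw [glue, dif_pos h, hc]

lemma adj_glue_of_mem_children (hT : G.IsTree) {u v c : V} {σ : children G r u → children G r v}
    {F : children G r u → V → V} (hF : ∀ c : children G r u, IsSubtreeHom G r c (σ c) (F c))
    (hc : c ∈ children G r u) : G.Adj v (glue G r u v F c) := by
  rw [glue_of_mem_descendants hT ⟨c, hc⟩ (self_mem_descendants G r c), (hF _).map_root]
  exact ((mem_children_iff hT).1 (σ ⟨c, hc⟩).2).1

lemma isSubtreeHom_glue (hT : G.IsTree) {u v : V} {σ : children G r u → children G r v}
    {F : children G r u → V → V}
    (hF : ∀ c : children G r u, IsSubtreeHom G r c (σ c) (F c)) :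
    IsSubtreeHom G r u v (glue G r u v F) where
  map_root := glue_root hT F
  mapsTo w hw := by
    rcases eq_or_ne w u with rfl | hwu
    · rw [glue_root hT F]
      exact self_mem_descendants G r v
    obtain ⟨c, hc, hwc⟩ := exists_mem_children_of_mem_descendants hT hw hwu
    rw [glue_of_mem_descendants hT ⟨c, hc⟩ hwc]
    exact descendants_subset_of_mem_children hT (σ ⟨c, hc⟩).2 ((hF _).mapsTo hwc)
  map_adj a ha b hb hab := by
    rcases eq_or_ne a u with rfl | hau
    · rw [glue_root hT F]
      exact adj_glue_of_mem_children hT hF (mem_children_of_adj_of_mem_descendants hT hb hab)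
    rcases eq_or_ne b u with rfl | hbu
    · rw [glue_root hT F]
      exact (adj_glue_of_mem_children hT hF
        (mem_children_of_adj_of_mem_descendants hT ha hab.symm)).symm
    obtain ⟨c, hc, hac, hbc⟩ := exists_mem_children_of_adj hT ha hb hau hbu hab
    rw [glue_of_mem_descendants hT ⟨c, hc⟩ hac, glue_of_mem_descendants hT ⟨c, hc⟩ hbc]
    exact (hF _).map_adj a hac b hbc hab

lemma leftInvOn_glue (hT : G.IsTree) {u v : V} {σ : children G r u → children G r v}
    {F : children G r u → V → V} {F' : children G r v → V → V}
    (h : ∀ c : children G r u, IsSubtreeIso G r c (σ c) (F c) (F' (σ c))) :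
    LeftInvOn (glue G r v u F') (glue G r u v F) (descendants G r u) := by
  intro w hw
  rcases eq_or_ne w u with rfl | hwu
  · rw [glue_root hT F, glue_root hT F']
  obtain ⟨c, hc, hwc⟩ := exists_mem_children_of_mem_descendants hT hw hwu
  rw [glue_of_mem_descendants hT ⟨c, hc⟩ hwc,
    glue_of_mem_descendants hT (σ ⟨c, hc⟩) ((h _).hom.mapsTo hwc)]
  exact (h _).invOn.1 hwc

lemma subtreeIso_of_equiv_children (hT : G.IsTree) {u v : V}
    (e : children G r u ≃ children G r v) (h : ∀ c : children G r u, SubtreeIso G r c (e c)) :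
    SubtreeIso G r u v := by
  choose f g hfg using h
  have hfg' : ∀ d : children G r v,
      IsSubtreeIso G r d (e.symm d) (g (e.symm d)) (f (e.symm d)) := fun d => by
    simpa using (hfg (e.symm d)).symm
  exact ⟨glue G r u v f, glue G r v u (fun d => g (e.symm d)),
    isSubtreeHom_glue hT fun c => (hfg c).hom, isSubtreeHom_glue hT fun d => (hfg' d).hom,
    leftInvOn_glue (σ := e) hT fun c => by simpa using hfg c, leftInvOn_glue hT hfg'⟩

theorem subtreeIso_iff_exists_equiv_children (hT : G.IsTree) {u v : V} :
    SubtreeIso G r u v ↔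
      ∃ e : children G r u ≃ children G r v,
        ∀ c : children G r u, SubtreeIso G r c (e c) := by
  refine ⟨fun ⟨f, g, h⟩ => ?_, fun ⟨e, he⟩ => subtreeIso_of_equiv_children hT e he⟩
  refine ⟨⟨fun c => ⟨f c, h.map_mem_children hT c.2⟩,
    fun d => ⟨g d, h.symm.map_mem_children hT d.2⟩,
    fun c => Subtype.ext (h.invOn.1 (mem_descendants_of_mem_children hT c.2)),
    fun d => Subtype.ext (h.invOn.2 (mem_descendants_of_mem_children hT d.2))⟩,
    fun c => ⟨f, g, h.restrict_child hT c.2⟩⟩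

end SubtreeIso

lemma _root_.Finset.val_map_eq_val_map_iff_exists_equiv {α β : Type*} (f : α → β)
    (C D : Finset α) :
    C.val.map f = D.val.map f ↔ ∃ e : C ≃ D, ∀ c, f (e c) = f c := by
  classical
  have hval : ∀ E : Finset α, E.val.map f = (Finset.univ : Finset E).val.map (f ∘ (↑)) := by
    intro E
    rw [Finset.univ_eq_attach, Finset.attach_val, ← Multiset.map_map, Multiset.attach_map_val]
  constructor
  · intro h
    have hcard : ∀ b, Fintype.card {c : C // f c = b} = Fintype.card {d : D // f d = b} := by
      intro b
      have := congrArg (Multiset.count b) h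
      rw [hval, hval, Multiset.count_map, Multiset.count_map] at this
      simpa [Fintype.card_subtype, Finset.card_def, Finset.filter_val, eq_comm] using this
    exact ⟨Equiv.ofFiberEquiv fun b => Fintype.equivOfCardEq (hcard b),
      Equiv.ofFiberEquiv_map (f := fun c : C => f c) (g := fun d : D => f d) _⟩
  · rintro ⟨e, he⟩
    rw [hval, hval, ← Multiset.map_univ_val_equiv e, Multiset.map_map]
    exact Multiset.map_congr rfl fun c _ => (he c).symm

lemma _root_.Multiset.map_eq_map_iff_of_injOn {α β : Type*} {f : α → β} {S : Set α}
    (hf : InjOn f S) {s t : Multiset α} (hs : ∀ x ∈ s, x ∈ S) (ht : ∀ x ∈ t, x ∈ S) :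
    s.map f = t.map f ↔ s = t := by
  lift s to Multiset S using hs
  lift t to Multiset S using ht
  simp only [Multiset.map_map]
  rw [(Multiset.map_injective Subtype.val_injective).eq_iff]
  exact (Multiset.map_injective hf.injective).eq_iff

lemma _root_.Multiset.sort_inj {α : Type*} (rel : α → α → Prop) [DecidableRel rel]
    [IsTrans α rel] [Std.Antisymm rel] [Std.Total rel] {s t : Multiset α} :
    s.sort rel = t.sort rel ↔ s = t :=
  ⟨fun h => by rw [← Multiset.sort_eq s rel, h, Multiset.sort_eq], congrArg _⟩

lemma compress_lt_compress {S : Finset (List ℕ)} {s t : List ℕ} (hs : s ∈ S) (hst : s < t) :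
    compress S s < compress S t := by
  refine Finset.card_lt_card ((Finset.ssubset_iff_of_subset fun x hx => ?_).2 ⟨s, ?_, ?_⟩)
  · rw [Finset.mem_filter] at hx ⊢
    exact ⟨hx.1, lt_trans (b := s) hx.2 hst⟩
  · exact Finset.mem_filter.2 ⟨hs, hst⟩
  · exact fun h => lt_irrefl s (Finset.mem_filter.1 h).2

lemma compress_injOn (S : Finset (List ℕ)) : InjOn (compress S) S :=
  StrictMonoOn.injOn fun _ hs _ _ hst => compress_lt_compress hs hst

section Levels

variable {G : SimpleGraph V} {r : V} [Fintype V]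

lemma dist_le_height (w : V) : G.dist r w ≤ height G r :=
  Finset.le_sup (Finset.mem_univ w)

lemma lvl_of_mem_children (hT : G.IsTree) {u c : V} {i : ℕ} (hc : c ∈ children G r u)
    (hu : lvl G r u = i + 1) : lvl G r c = i := by
  have := ((mem_children_iff hT).1 hc).2
  have := dist_le_height (G := G) (r := r) c
  unfold lvl at *
  omega

lemma children_eq_empty_of_lvl_eq_zero (hT : G.IsTree) {u : V} (hu : lvl G r u = 0) :
    children G r u = ∅ :=
  Finset.eq_empty_of_forall_notMem fun c hc => by
    have := ((mem_children_iff hT).1 hc).2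
    have := dist_le_height (G := G) (r := r) c
    unfold lvl at hu
    omega

lemma ne_root_of_lvl_eq (hT : G.IsTree) {u v : V} (h : lvl G r u = lvl G r v) (huv : u ≠ v) :
    v ≠ r := by
  intro hvr
  have := dist_le_height (G := G) (r := r) u
  have hu : G.dist r u = 0 := by simp [lvl, hvr] at h; omega
  exact huv ((hT.connected.dist_eq_zero_iff.1 hu).symm.trans hvr.symm)

lemma labelAt_mem_image {c : V} {i : ℕ} (hc : lvl G r c = i) :
    labelAt G r i c ∈ (levelSet G r i).image (labelAt G r i) :=
  Finset.mem_image_of_mem _ (by simp [levelSet, hc])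

lemma labelAt_succ_of_ne_root (hT : G.IsTree) {u : V} (hu : u ≠ r) (i : ℕ) :
    labelAt G r (i + 1) u = ((children G r u).val.map
      (compress ((levelSet G r i).image (labelAt G r i)) ∘ labelAt G r i)).sort (· ≤ ·) := by
  rw [labelAt]
  split_ifs with h
  · simp [(isLeaf_iff_children_eq_empty hT hu).1 h]
  · rfl

theorem labelAt_eq_iff_subtreeIso (hT : G.IsTree) (i : ℕ) {u v : V} (hu : lvl G r u = i)
    (hv : lvl G r v = i) : labelAt G r i u = labelAt G r i v ↔ SubtreeIso G r u v := by
  induction i generalizing u v with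
  | zero =>
    have hu0 := children_eq_empty_of_lvl_eq_zero hT hu
    have hv0 := children_eq_empty_of_lvl_eq_zero hT hv
    refine iff_of_true rfl ((subtreeIso_iff_exists_equiv_children hT).2
      ⟨hu0 ▸ hv0 ▸ Equiv.refl _, fun c => absurd c.2 (by simp [hu0])⟩)
  | succ i ih =>
    rcases eq_or_ne u v with rfl | huv
    · exact iff_of_true rfl (SubtreeIso.refl u)
    have hlabel : ∀ {w c}, lvl G r w = i + 1 →
        c ∈ (children G r w).val.map (labelAt G r i) →
        c ∈ (levelSet G r i).image (labelAt G r i) := fun hw hc => by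
      obtain ⟨d, hd, rfl⟩ := Multiset.mem_map.1 hc
      exact labelAt_mem_image (lvl_of_mem_children hT hd hw)
    rw [labelAt_succ_of_ne_root hT (ne_root_of_lvl_eq hT (hv.trans hu.symm) huv.symm),
      labelAt_succ_of_ne_root hT (ne_root_of_lvl_eq hT (hu.trans hv.symm) huv), Multiset.sort_inj,
      ← Multiset.map_map, ← Multiset.map_map,
      Multiset.map_eq_map_iff_of_injOn (compress_injOn _) (fun _ => hlabel hu) (fun _ => hlabel hv),
      Finset.val_map_eq_val_map_iff_exists_equiv, subtreeIso_iff_exists_equiv_children hT]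
    refine exists_congr fun e => forall_congr' fun c => ?_
    rw [eq_comm]
    exact ih (lvl_of_mem_children hT c.2 hu) (lvl_of_mem_children hT (e c).2 hv)

end Levels

/-- **Labels and descendant subtrees.** Two vertices `u` and `v` of a rooted tree lying at the
same level have equal compressed descendant labels if and only if the subtree induced on the
descendants of `u`, rooted at `u`, is isomorphic (as a rooted tree) to the subtree induced on
the descendants of `v`, rooted at `v`. -/
theorem cdl_eq_iff_descendant_subtrees_iso {V : Type*} [Fintype V]
    (G : SimpleGraph V) (r : V) (hT : G.IsTree) (u v : V)
    (hlvl : lvl G r u = lvl G r v) :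
    cdl G r u = cdl G r v ↔
      ∃ φ : (G.induce (descendants G r u)) ≃g (G.induce (descendants G r v)),
        φ ⟨u, self_mem_descendants G r u⟩ = ⟨v, self_mem_descendants G r v⟩ := by
  rw [cdl, cdl, hlvl, labelAt_eq_iff_subtreeIso hT _ hlvl rfl, subtreeIso_iff_exists_iso]

end AHU
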